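/- arXiv:1011.4836 — 2 statements merged into one kernel-verified Lean document; each statement's English description precedes it below -/
import Mathlib

section
/- Let N = K·p^n + 1 where p is prime and K < p^n. If there exists an integer a with a^(N-1) ≡ 1 (mod N) and gcd(a^((N-1)/p) - 1, N) = 1, then N is prime. -/
/-!
For every prime `q ∣ N`, the image of `a` in `ZMod q` satisfies `a ^ (N - 1) = 1` but
`a ^ ((N - 1) / p) ≠ 1`, so `a ^ K` has order exactly `p ^ n`. Hence `p ^ n ∣ q - 1`, so
`q > p ^ n > √N`, and a number all of whose prime factors exceed its square root is prime.
-/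

theorem FiniteField.prime_pow_dvd_card_sub_one {F : Type*} [Field F] [Fintype F] {p K n : ℕ}
    [Fact p.Prime] {b : F} (hpow : b ^ (K * p ^ (n + 1)) = 1) (hpow' : b ^ (K * p ^ n) ≠ 1) :
    p ^ (n + 1) ∣ Fintype.card F - 1 := by
  have hb : b ≠ 0 := by
    rintro rfl
    have hexp : K * p ^ n ≠ 0 := fun h ↦ hpow' (by rw [h, pow_zero])
    rw [pow_succ, ← mul_assoc, zero_pow (mul_ne_zero hexp (Fact.out : p.Prime).ne_zero)] at hpow
    exact zero_ne_one hpow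
  have horder : orderOf (b ^ K) = p ^ (n + 1) :=
    orderOf_eq_prime_pow (by rwa [← pow_mul]) (by rwa [← pow_mul])
  calc p ^ (n + 1) = orderOf (b ^ K) := horder.symm
    _ ∣ orderOf b := orderOf_pow_dvd K
    _ ∣ Fintype.card F - 1 := orderOf_dvd_of_pow_eq_one (FiniteField.pow_card_sub_one_eq_one b hb)

theorem Nat.prime_of_forall_prime_dvd_lt_sq {N : ℕ} (hN : 2 ≤ N)
    (h : ∀ q, q.Prime → q ∣ N → N < q ^ 2) : N.Prime := by
  by_contra hNp
  have hle := Nat.minFac_sq_le_self (by omega) hNp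
  have hlt := h _ (Nat.minFac_prime (by omega)) (Nat.minFac_dvd N)
  omega

theorem ZMod.intCast_ne_one_of_gcd_sub_one_eq_one {x : ℤ} {N q : ℕ}
    (hgcd : Int.gcd (x - 1) N = 1) (hq : q ∣ N) (hq1 : q ≠ 1) : (x : ZMod q) ≠ 1 := by
  intro hx
  have hdvd : (q : ℤ) ∣ x - 1 := by
    rw [← ZMod.intCast_zmod_eq_zero_iff_dvd]
    push_cast [hx]
    ring
  have := Int.dvd_coe_gcd hdvd (Int.natCast_dvd_natCast.mpr hq)
  rw [hgcd] at this
  exact hq1 (by exact_mod_cast Int.eq_one_of_dvd_one (by positivity) this)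

theorem ZMod.intCast_pow_eq_one_of_dvd {N q k : ℕ} {x : ℤ} (hq : q ∣ N)
    (h : (x : ZMod N) ^ k = 1) : (x : ZMod q) ^ k = 1 := by
  have := congrArg (ZMod.castHom hq (ZMod q)) h
  rwa [map_pow, map_intCast, map_one] at this

theorem pocklington_general (p K n N : ℕ) (hp : p.Prime) (hK : 0 < K)
    (hKlt : K < p ^ n) (hN : N = K * p ^ n + 1) (a : ℤ)
    (h1 : (a : ZMod N) ^ (N - 1) = 1)
    (h2 : Int.gcd (a ^ ((N - 1) / p) - 1) N = 1) : Nat.Prime N := by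
  have := Fact.mk hp
  obtain ⟨m, rfl⟩ : ∃ m, n = m + 1 :=
    Nat.exists_eq_succ_of_ne_zero (by rintro rfl; rw [pow_zero] at hKlt; omega)
  have hN1 : N - 1 = K * p ^ (m + 1) := by omega
  have hNp : (N - 1) / p = K * p ^ m := by
    rw [hN1, pow_succ, ← mul_assoc, Nat.mul_div_cancel _ hp.pos]
  refine Nat.prime_of_forall_prime_dvd_lt_sq (by subst hN; nlinarith [hp.one_lt]) ?_
  intro q hq hqN
  have := Fact.mk hq
  have hpow : (a : ZMod q) ^ (K * p ^ (m + 1)) = 1 := hN1 ▸ ZMod.intCast_pow_eq_one_of_dvd hqN h1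
  have hpow' : (a : ZMod q) ^ (K * p ^ m) ≠ 1 := by
    simpa [hNp] using ZMod.intCast_ne_one_of_gcd_sub_one_eq_one h2 hqN hq.ne_one
  have hdvd := FiniteField.prime_pow_dvd_card_sub_one hpow hpow'
  rw [ZMod.card] at hdvd
  have hq_ge : p ^ (m + 1) + 1 ≤ q := by
    have := Nat.le_of_dvd (by have := hq.two_le; omega) hdvd
    omega
  subst hN
  nlinarith

theorem pocklington (p K n N : ℕ) (hp : p.Prime) (hK : 0 < K) (hn : 0 < n)
    (hKlt : K < p ^ n) (hN : N = K * p ^ n + 1) (a : ℤ)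
    (h1 : (a : ZMod N) ^ (N - 1) = 1)
    (h2 : Int.gcd (a ^ ((N - 1) / p) - 1) N = 1) : Nat.Prime N :=
  pocklington_general p K n N hp hK hKlt hN a h1 h2
end

section
/- Let N = K·p^n + 1 where p is prime and gcd(K,p) = 1. If there exists j with 1 ≤ j ≤ n such that Φ_p(2^(K·p^(j-1))) ≡ 0 (mod N) and p^(2j) > K·p^n, then N is prime. -/
/-!
A Pocklington-type argument. Let `q` be a prime factor of `N` and `x = 2 ^ (K * p ^ (j - 1))`
mod `q`. Since `Φ_p(x) = 0` we get `x ^ p = 1`, and `x ≠ 1` because `Φ_p(1) = p` is a unit mod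
`q` (`p ∤ N`). Hence the order of `2` mod `q` divides `K * p ^ j` but not `K * p ^ (j - 1)`, so
it is divisible by `p ^ j`; as it divides `q - 1`, every prime factor of `N` exceeds `p ^ j`.
Since `N ≤ p ^ (2 * j)`, a composite `N` would have a prime factor at most `√N ≤ p ^ j`.
-/

open Finset

theorem pow_eq_one_of_geom_sum_eq_zero {R : Type*} [Ring R] {x : R} {n : ℕ}
    (h : ∑ i ∈ range n, x ^ i = 0) : x ^ n = 1 :=
  sub_eq_zero.1 (by rw [← geom_sum_mul, h, zero_mul])

theorem Nat.not_dvd_mul_pow_add_one {p K n : ℕ} (hp : p ≠ 1) (hn : n ≠ 0) :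
    ¬ p ∣ K * p ^ n + 1 := fun h =>
  hp (Nat.dvd_one.1 ((Nat.dvd_add_right (dvd_mul_of_dvd_right (dvd_pow_self p hn) K)).1 h))

theorem Nat.pow_succ_factorization_dvd_of_dvd_mul_of_not_dvd {p a d : ℕ} (hp : p.Prime)
    (ha : a ≠ 0) (hd : d ∣ a * p) (hda : ¬ d ∣ a) : p ^ (a.factorization p + 1) ∣ d := by
  have hd0 : d ≠ 0 := by
    rintro rfl
    exact mul_ne_zero ha hp.ne_zero (Nat.eq_zero_of_zero_dvd hd)
  rw [hp.pow_dvd_iff_le_factorization hd0]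
  by_contra! hlt
  refine hda ((Nat.factorization_le_iff_dvd hd0 ha).1 (Finsupp.le_def.2 fun ℓ => ?_))
  have hℓ := Finsupp.le_def.1
    ((Nat.factorization_le_iff_dvd hd0 (mul_ne_zero ha hp.ne_zero)).2 hd) ℓ
  rw [Nat.factorization_mul ha hp.ne_zero, hp.factorization, Finsupp.add_apply,
    Finsupp.single_apply] at hℓ
  split_ifs at hℓ with hpℓ
  · subst hpℓ; omega
  · simpa using hℓ

theorem pow_factorization_succ_dvd_orderOf {G : Type*} [Monoid G] {a : G} {m p : ℕ}
    (hp : p.Prime) (hm : m ≠ 0) (ha : (a ^ m) ^ p = 1) (ha1 : a ^ m ≠ 1) :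
    p ^ (m.factorization p + 1) ∣ orderOf a :=
  Nat.pow_succ_factorization_dvd_of_dvd_mul_of_not_dvd hp hm
    (orderOf_dvd_of_pow_eq_one (by rwa [pow_mul]))
    (mt orderOf_dvd_iff_pow_eq_one.1 ha1)

theorem pow_lt_of_prime_dvd_mul_pow_add_one {p q K n j : ℕ} [Fact q.Prime] (hp : p.Prime)
    (hK : K ≠ 0) (hj : 1 ≤ j) (hjn : j ≤ n) (hq : q ∣ K * p ^ n + 1) {a : ZMod q}
    (hsum : ∑ i ∈ range p, (a ^ (K * p ^ (j - 1))) ^ i = 0) : p ^ j < q := by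
  set m := K * p ^ (j - 1)
  have hm : m ≠ 0 := mul_ne_zero hK (pow_ne_zero _ hp.ne_zero)
  have hap : (a ^ m) ^ p = 1 := pow_eq_one_of_geom_sum_eq_zero hsum
  have hpq : (p : ZMod q) ≠ 0 := by
    rw [Ne, ZMod.natCast_eq_zero_iff]
    intro hqp
    rw [(Nat.prime_dvd_prime_iff_eq Fact.out hp).1 hqp] at hq
    exact Nat.not_dvd_mul_pow_add_one hp.ne_one (by omega) hq
  have ham : a ^ m ≠ 1 := by
    intro h1
    simp only [h1, one_pow, sum_const, card_range, nsmul_eq_mul, mul_one] at hsum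
    exact hpq hsum
  have ha : a ≠ 0 := by
    rintro rfl
    rw [zero_pow hm, zero_pow hp.ne_zero] at hap
    exact zero_ne_one hap
  have hjm : j - 1 ≤ m.factorization p :=
    (hp.pow_dvd_iff_le_factorization hm).1 (dvd_mul_left _ _)
  have hdvd : p ^ j ∣ q - 1 :=
    (pow_dvd_pow p (by omega)).trans
      ((pow_factorization_succ_dvd_orderOf hp hm hap ham).trans (ZMod.orderOf_dvd_card_sub_one ha))
  have hq2 := (Fact.out : q.Prime).two_le
  have := Nat.le_of_dvd (by omega) hdvd
  omega

theorem sufficient_primality_base_two_general (p K n N : ℕ) (hp : p.Prime) (hK : 0 < K)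
    (hN : N = K * p ^ n + 1)
    (h : ∃ j, 1 ≤ j ∧ j ≤ n ∧
      ∑ i ∈ Finset.range p, ((2 : ZMod N) ^ (K * p ^ (j - 1))) ^ i = 0 ∧
      K * p ^ n < p ^ (2 * j)) : Nat.Prime N := by
  obtain ⟨j, hj1, hjn, hsum, hsize⟩ := h
  subst hN
  by_contra hcomp
  have hNpos : 0 < K * p ^ n := mul_pos hK (pow_pos hp.pos n)
  set q := (K * p ^ n + 1).minFac
  have hq : q ∣ K * p ^ n + 1 := Nat.minFac_dvd _
  have : Fact q.Prime := ⟨Nat.minFac_prime (by omega)⟩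
  have hsumq : ∑ i ∈ range p, ((2 : ZMod q) ^ (K * p ^ (j - 1))) ^ i = 0 := by
    simpa [map_sum, map_pow, map_ofNat] using congrArg (ZMod.castHom hq (ZMod q)) hsum
  have hlt := Nat.pow_lt_pow_left (pow_lt_of_prime_dvd_mul_pow_add_one hp hK.ne' hj1 hjn hq hsumq)
    two_ne_zero
  have hsq : q ^ 2 ≤ K * p ^ n + 1 := Nat.minFac_sq_le_self (by positivity) hcomp
  rw [← pow_mul, mul_comm] at hlt
  omega

theorem sufficient_primality_base_two (p K n N : ℕ) (hp : p.Prime) (hK : 0 < K)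
    (hn : 0 < n) (hKp : Nat.gcd K p = 1) (hN : N = K * p ^ n + 1)
    (h : ∃ j, 1 ≤ j ∧ j ≤ n ∧
      ∑ i ∈ Finset.range p, ((2 : ZMod N) ^ (K * p ^ (j - 1))) ^ i = 0 ∧
      K * p ^ n < p ^ (2 * j)) : Nat.Prime N :=
  sufficient_primality_base_two_general p K n N hp hK hN h
end
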